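/- Under the flip dynamics on configurations valued in {0,1,2,3}, the relative left-to-right order of type-0 and type-3 particles is invariant: if c and c' are in the same sector, then reading off only the sites with values in {0,3} from left to right gives the same word in {0,3}* for c and c'. -/

import Mathlib

/-- A single flip: the values at two adjacent sites, which differ by exactly 1,
are swapped; all other sites are unchanged. -/
def FlipStep {N k : ℕ} (c c' : Fin N → Fin k) : Prop :=
  ∃ j j' : Fin N, j.val + 1 = j'.val ∧
    ((c j').val = (c j).val + 1 ∨ (c j).val = (c j').val + 1) ∧
    c' j = c j' ∧ c' j' = c j ∧ ∀ i : Fin N, i ≠ j → i ≠ j' → c' i = c i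

/-- Two configurations are in the same sector iff they are related by finitely many flips. -/
def SameSector {N k : ℕ} (c c' : Fin N → Fin k) : Prop :=
  Relation.ReflTransGen FlipStep c c'

/-- The restriction word of `c`: the values at the sites carrying a 0 or a 3, read from
left to right. -/
def restrictionWord {N : ℕ} (c : Fin N → Fin 4) : List (Fin 4) :=
  ((List.finRange N).filter (fun j => c j = 0 ∨ c j = 3)).map c

lemma restrictionWord_eq_flatMap {N : ℕ} (c : Fin N → Fin 4) :
    restrictionWord c =
      (List.finRange N).flatMap (fun j => if c j = 0 ∨ c j = 3 then [c j] else []) := by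
  unfold restrictionWord
  induction (List.finRange N) with
  | nil => simp
  | cons a l ih =>
    rw [List.flatMap_cons, ← ih, List.filter_cons]
    by_cases h : c a = 0 ∨ c a = 3
    · rw [if_pos h, if_pos (by simpa using h), List.map_cons]
      rfl
    · rw [if_neg h, if_neg (by simpa using h)]
      rfl

lemma flatMap_congr' {α β : Type*} {f g : α → List β} :
    ∀ l : List α, (∀ i ∈ l, f i = g i) → l.flatMap f = l.flatMap g
  | [], _ => rfl
  | a :: l, h => by
    simp only [List.flatMap_cons, h a List.mem_cons_self,
      flatMap_congr' l fun i hi => h i (List.mem_cons_of_mem a hi)]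

lemma middle_swap : ∀ a b : Fin 4, (b.val = a.val + 1 ∨ a.val = b.val + 1) →
    ((if a = 0 ∨ a = 3 then [a] else []) ++ (if b = 0 ∨ b = 3 then [b] else []) : List (Fin 4)) =
      (if b = 0 ∨ b = 3 then [b] else []) ++ (if a = 0 ∨ a = 3 then [a] else []) := by
  decide

lemma flipStep_restrictionWord {N : ℕ} {c c' : Fin N → Fin 4} (h : FlipStep c c') :
    restrictionWord c = restrictionWord c' := by
  obtain ⟨j, j', hadj, hdiff, h1, h2, h3⟩ := h
  have hj' : j'.val < N := j'.isLt
  have hsplit : List.finRange N =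
      (List.finRange N).take j.val ++ j :: j' :: (List.finRange N).drop (j.val + 2) := by
    conv_lhs => rw [← List.take_append_drop j.val (List.finRange N)]
    congr 1
    rw [List.drop_eq_getElem_cons (by simp only [List.length_finRange]; omega), List.drop_eq_getElem_cons (by simp only [List.length_finRange]; omega)]
    simp only [List.getElem_finRange]
    refine congrArg₂ List.cons ?_ (congrArg₂ List.cons ?_ rfl)
    · exact Fin.ext (by simp)
    · exact Fin.ext (by simp only [Fin.coe_cast]; exact hadj)
  rw [restrictionWord_eq_flatMap, restrictionWord_eq_flatMap, hsplit]
  simp only [List.flatMap_append, List.flatMap_cons]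
  have hL : ∀ i ∈ (List.finRange N).take j.val,
      (if c i = 0 ∨ c i = 3 then [c i] else []) = (if c' i = 0 ∨ c' i = 3 then [c' i] else []) := by
    intro i hi
    rw [List.mem_take_iff_getElem] at hi
    obtain ⟨n, hn, he⟩ := hi
    have hiv : i.val < j.val := by
      simp only [List.getElem_finRange] at he
      have := congrArg Fin.val he
      simp at this
      omega
    rw [h3 i (by intro hh; subst hh; omega) (by intro hh; subst hh; omega)]
  have hR : ∀ i ∈ (List.finRange N).drop (j.val + 2),
      (if c i = 0 ∨ c i = 3 then [c i] else []) = (if c' i = 0 ∨ c' i = 3 then [c' i] else []) := by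
    intro i hi
    rw [List.mem_drop_iff_getElem] at hi
    obtain ⟨n, hn, he⟩ := hi
    have hiv : j.val + 2 ≤ i.val := by
      simp only [List.getElem_finRange] at he
      have := congrArg Fin.val he
      simp at this
      omega
    rw [h3 i (by intro hh; subst hh; omega) (by intro hh; subst hh; omega)]
  rw [flatMap_congr' _ hL, flatMap_congr' _ hR, h1, h2]
  have := middle_swap (c j) (c j') hdiff
  congr 1
  rw [← List.append_assoc, ← List.append_assoc, this]

/-- Flip dynamics preserves the relative left-to-right order of type-0 and type-3
particles: configurations in the same sector have the same restriction word. -/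
theorem sameSector_restrictionWord_eq {N : ℕ} (c c' : Fin N → Fin 4)
    (h : SameSector c c') : restrictionWord c = restrictionWord c' := by
  induction h with
  | refl => rfl
  | tail _ hstep ih => rw [ih, flipStep_restrictionWord hstep]
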